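/- Let s ≥ 1 be an integer, let G be an H_s-free graph with clique number ω, and let 𝓛 = (L_0, L_1, …, L_k) be an optimal s-template in G. Then for each integer m ≥ 0, the union of the sets M_I over all m-small subsets I ⊆ {1,…,k} induces a subgraph of chromatic number at most 2ω(m + ω^{s+1}). -/

import Mathlib

open SimpleGraph Set

/-- `G` contains no induced subgraph isomorphic to `H`. -/
def IsInducedFree {V : Type*} {W : Type*} (G : SimpleGraph V) (H : SimpleGraph W) : Prop :=
  ∀ s : Set V, ¬ Nonempty ((G.induce s) ≃g H)

/-- The double star `H_s`: two adjacent internal vertices `0` and `1`; `0` is adjacent to the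
`s` leaves `2,…,s+1` and `1` is adjacent to the `s` leaves `s+2,…,2s+1`. -/
def doubleStarGraph (s : ℕ) : SimpleGraph (Fin (2*s+2)) :=
  SimpleGraph.fromRel (fun a b =>
    ((a : ℕ) = 0 ∧ (b : ℕ) = 1) ∨
    ((a : ℕ) = 0 ∧ 2 ≤ (b : ℕ) ∧ (b : ℕ) ≤ s+1) ∨
    ((a : ℕ) = 1 ∧ s+2 ≤ (b : ℕ)))

/-- A graph has degeneracy at most `d` if every nonempty subgraph has a vertex whose degree
in that subgraph is at most `d`. -/
def DegeneracyAtMost {V : Type*} (G : SimpleGraph V) (d : ℕ) : Prop :=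
  ∀ H : G.Subgraph, H.verts.Nonempty → ∃ v ∈ H.verts, (H.neighborSet v).ncard ≤ d

/-- A `(k,d)`-colouring: a partition of the vertex set into `k` parts, each inducing a
subgraph of degeneracy at most `d`. -/
def KDColorable {V : Type*} (G : SimpleGraph V) (k d : ℕ) : Prop :=
  ∃ f : V → Fin k, ∀ i : Fin k, DegeneracyAtMost (G.induce {v | f v = i}) d

/-- `G` contains the complete bipartite graph `K_{t,t}` as a (not necessarily induced)
subgraph. -/
def ContainsKtt {V : Type*} (G : SimpleGraph V) (t : ℕ) : Prop :=
  ∃ A B : Finset V, A.card = t ∧ B.card = t ∧ Disjoint A B ∧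
    ∀ a ∈ A, ∀ b ∈ B, G.Adj a b

/-- A set of vertices is stable (independent) if no two of its members are adjacent. -/
def IsStableSet {V : Type*} (G : SimpleGraph V) (S : Set V) : Prop :=
  ∀ a ∈ S, ∀ b ∈ S, a ≠ b → ¬ G.Adj a b

/-- An `s`-template in `G`: a clique `L0` complete to all the `L i`, pairwise disjoint sets
`L 1, …, L k` (here indexed by `Fin k`) whose sizes lie between `ω^{s+5}` and `14 ω^{s+6}`,
such that each vertex of `L i` has at most `ω^{s+3}` non-neighbours in each other `L j`. -/
def IsTemplate {V : Type*} (G : SimpleGraph V) (s : ℕ) (L0 : Set V) {k : ℕ}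
    (L : Fin k → Set V) : Prop :=
  (∀ i : Fin k, Disjoint L0 (L i)) ∧
  (Pairwise fun i j : Fin k => Disjoint (L i) (L j)) ∧
  G.IsClique L0 ∧
  (∀ u ∈ L0, ∀ i : Fin k, ∀ v ∈ L i, G.Adj u v) ∧
  (∀ i : Fin k, G.cliqueNum ^ (s+5) ≤ (L i).ncard ∧ (L i).ncard ≤ 14 * G.cliqueNum ^ (s+6)) ∧
  (∀ i j : Fin k, i ≠ j → ∀ v ∈ L i,
    ({u ∈ L j | ¬ G.Adj v u}).ncard ≤ G.cliqueNum ^ (s+3))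

/-- The value of an `s`-template. -/
noncomputable def templateValue {V : Type*} (G : SimpleGraph V) (s : ℕ) (L0 : Set V) {k : ℕ}
    (L : Fin k → Set V) : ℕ :=
  (⋃ i, L i).ncard + 7 * G.cliqueNum ^ (s+5) * L0.ncard + k * G.cliqueNum ^ (s+5)

/-- An optimal `s`-template: one of maximum value among all `s`-templates in `G`. -/
def IsOptimalTemplate {V : Type*} (G : SimpleGraph V) (s : ℕ) (L0 : Set V) {k : ℕ}
    (L : Fin k → Set V) : Prop :=
  IsTemplate G s L0 L ∧
  ∀ (k' : ℕ) (L0' : Set V) (L' : Fin k' → Set V), IsTemplate G s L0' L' →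
    templateValue G s L0' L' ≤ templateValue G s L0 L

/-- `V(𝓛)`, the vertex set of a template. -/
def templateVerts {V : Type*} (L0 : Set V) {k : ℕ} (L : Fin k → Set V) : Set V :=
  L0 ∪ ⋃ i, L i

/-- `N(𝓛)`: the vertices outside `V(𝓛)` with a neighbour in `L 1 ∪ ⋯ ∪ L k`. -/
def templateNbhd {V : Type*} (G : SimpleGraph V) (L0 : Set V) {k : ℕ}
    (L : Fin k → Set V) : Set V :=
  {v | v ∉ templateVerts L0 L ∧ ∃ i : Fin k, ∃ u ∈ L i, G.Adj v u}


/-- A vertex `v` is pendant with respect to the template: there are distinct `i, j`, a vertex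
`u ∈ L j` and a stable set `S ⊆ L i` of `s+1` common neighbours of `u` such that `v` is not
adjacent to `u` and `v` has exactly one neighbour in `S`. -/
def TemplatePendant {V : Type*} (G : SimpleGraph V) (s : ℕ) {k : ℕ}
    (L : Fin k → Set V) (v : V) : Prop :=
  ∃ i j : Fin k, i ≠ j ∧ ∃ u ∈ L j, ∃ S : Set V, S ⊆ L i ∧ S.ncard = s + 1 ∧
    IsStableSet G S ∧ (∀ w ∈ S, G.Adj u w) ∧ ¬ G.Adj v u ∧ ({w ∈ S | G.Adj v w}).ncard = 1

/-- A vertex `v` is dense with respect to the template: there are `j` and `u ∈ L j` such that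
for all `i ≠ j`, fewer than `ω^{s+2}/14` vertices of `L i` are adjacent to `u` and not to `v`. -/
def TemplateDense {V : Type*} (G : SimpleGraph V) (s : ℕ) {k : ℕ}
    (L : Fin k → Set V) (v : V) : Prop :=
  ∃ j : Fin k, ∃ u ∈ L j, ∀ i : Fin k, i ≠ j →
    14 * ({w ∈ L i | G.Adj u w ∧ ¬ G.Adj v w}).ncard < G.cliqueNum ^ (s+2)

/-- A vertex `v` is pure with respect to the template: it has no neighbour in at least two of
the sets `L i`, and for each `i`, either it has no neighbour in `L i` or it has at most
`ω^{s+2}/7` non-neighbours in `L i`. -/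
def TemplatePure {V : Type*} (G : SimpleGraph V) (s : ℕ) {k : ℕ}
    (L : Fin k → Set V) (v : V) : Prop :=
  (∃ i₁ i₂ : Fin k, i₁ ≠ i₂ ∧ (∀ w ∈ L i₁, ¬ G.Adj v w) ∧ (∀ w ∈ L i₂, ¬ G.Adj v w)) ∧
  (∀ i : Fin k, (∀ w ∈ L i, ¬ G.Adj v w) ∨
    7 * ({w ∈ L i | ¬ G.Adj v w}).ncard ≤ G.cliqueNum ^ (s+2))

/-- `M_I`: the pure vertices `v` (with respect to the template) whose set `I_v` of indices `i`
such that `v` has a neighbour in `L i` equals `I`. -/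
def templatePart {V : Type*} (G : SimpleGraph V) (s : ℕ) (L0 : Set V) {k : ℕ}
    (L : Fin k → Set V) (I : Set (Fin k)) : Set V :=
  {v | v ∈ templateNbhd G L0 L ∧ TemplatePure G s L v ∧
    ∀ i : Fin k, (∃ u ∈ L i, G.Adj v u) ↔ i ∈ I}

/-- Two disjoint sets `A, B` are `s`-crowded if there is no stable set meeting each of them
in exactly `s` vertices. -/
def SCrowded {V : Type*} (G : SimpleGraph V) (s : ℕ) (A B : Set V) : Prop :=
  ¬ ∃ X : Set V, IsStableSet G X ∧ (X ∩ A).ncard = s ∧ (X ∩ B).ncard = s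

/-- `c` satisfies the Kővári–Sós–Turán-type bound for `H_s`: every `H_s`-free graph either
contains `K_{t,t}` as a subgraph or has degeneracy less than `t^c`. -/
def KSTBound (s c : ℕ) : Prop :=
  ∀ (W : Type) [Fintype W], ∀ G' : SimpleGraph W, IsInducedFree G' (doubleStarGraph s) →
    ∀ t : ℕ, ContainsKtt G' t ∨ ∃ D : ℕ, D < t ^ c ∧ DegeneracyAtMost G' D

/-- `Z(𝓛)`: the union of `L0` with the set of vertices of `N(𝓛)` having at most `ω^{s+2}/4`
non-neighbours in each `L i`. -/
def templateZ {V : Type*} (G : SimpleGraph V) (s : ℕ) (L0 : Set V) {k : ℕ}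
    (L : Fin k → Set V) : Set V :=
  L0 ∪ {v ∈ templateNbhd G L0 L |
    ∀ i : Fin k, 4 * ({u ∈ L i | ¬ G.Adj v u}).ncard ≤ G.cliqueNum ^ (s+2)}

/-- `Y(𝓛) = (V(𝓛) ∪ N(𝓛)) \ Z(𝓛)`. -/
def templateY {V : Type*} (G : SimpleGraph V) (s : ℕ) (L0 : Set V) {k : ℕ}
    (L : Fin k → Set V) : Set V :=
  (templateVerts L0 L ∪ templateNbhd G L0 L) \ templateZ G s L0 L

/-- `N_A(𝓛)`: the vertices of `A \ V(𝓛)` with a neighbour in `L 1 ∪ ⋯ ∪ L k`. -/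
def templateNbhdIn {V : Type*} (G : SimpleGraph V) (A : Set V) (L0 : Set V) {k : ℕ}
    (L : Fin k → Set V) : Set V :=
  {v ∈ A | v ∉ templateVerts L0 L ∧ ∃ i : Fin k, ∃ u ∈ L i, G.Adj v u}

/-- `Z_A(𝓛)`: the union of `L0` with the set of vertices of `A \ V(𝓛)` having at most
`ω^{s+2}/4` non-neighbours in each `L i`. -/
def templateZIn {V : Type*} (G : SimpleGraph V) (s : ℕ) (A : Set V) (L0 : Set V) {k : ℕ}
    (L : Fin k → Set V) : Set V :=
  L0 ∪ {v ∈ A | v ∉ templateVerts L0 L ∧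
    ∀ i : Fin k, 4 * ({u ∈ L i | ¬ G.Adj v u}).ncard ≤ G.cliqueNum ^ (s+2)}

/-- `Y_A(𝓛) = (V(𝓛) ∪ N_A(𝓛)) \ Z_A(𝓛)`. -/
def templateYIn {V : Type*} (G : SimpleGraph V) (s : ℕ) (A : Set V) (L0 : Set V) {k : ℕ}
    (L : Fin k → Set V) : Set V :=
  (templateVerts L0 L ∪ templateNbhdIn G A L0 L) \ templateZIn G s A L0 L

/-!
Every vertex of `M_I` misses at least two of the sets `L i` entirely. Group the vertices of the
small parts by one such index `t` and colour each group greedily, in increasing order of `|I_v|`.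
A neighbour `w` of `v` in the group of `t` with `|I_w| ≤ |I_v|` either lies in `M_{I_v}` (fewer
than `m` choices) or misses some `L j` with `j ∈ I_v`. For fixed `j` there are fewer than `ω^s`
such `w`: otherwise Ramsey's theorem (cliques have at most `ω` vertices) yields a stable `s`-set
among them and, for a neighbour `a ∈ L j` of `v`, a stable `s`-set among the many neighbours of
`a` in `L t`; with `v` and `a` these induce `H_s`. Since a template has `k ≤ ω` sets, `v` has
fewer than `m + ω^{s+1}` earlier neighbours in its group, and the `k ≤ ω` groups need at most
`ω (m + ω^{s+1})` colours.
-/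

open Finset in
theorem SimpleGraph.exists_isNIndepSet_or_isNClique {V : Type*} (G : SimpleGraph V) (c s : ℕ)
    (A : Finset V) (hA : (c + s).choose c ≤ #A) :
    (∃ S ⊆ A, G.IsNIndepSet s S) ∨ ∃ K ⊆ A, G.IsNClique (c + 1) K := by
  classical
  induction c generalizing s A with
  | zero =>
    obtain ⟨x, hx⟩ : A.Nonempty := by rw [← card_pos]; simpa using hA
    exact .inr ⟨{x}, by simpa using hx, by simp⟩
  | succ c ihc =>
    induction s generalizing A with
    | zero => exact .inl ⟨∅, empty_subset _, by simp [isNIndepSet_iff]⟩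
    | succ s ihs =>
      obtain ⟨x, hx⟩ : A.Nonempty := by
        rw [← card_pos]; exact (Nat.choose_pos (by omega)).trans_le hA
      set N := (A.erase x).filter (G.Adj x)
      set M := (A.erase x).filter (¬ G.Adj x ·)
      have hNM : #N + #M + 1 = #A := by
        rw [card_filter_add_card_filter_not, card_erase_add_one hx]
      have hpascal : (c + 1 + (s + 1)).choose (c + 1)
          = (c + (s + 1)).choose c + (c + 1 + s).choose (c + 1) := by
        rw [show c + 1 + (s + 1) = c + (s + 1) + 1 by omega, Nat.choose_succ_succ,
          show c + (s + 1) = c + 1 + s by omega]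
      -- Pascal's rule: `x` has many neighbours or many non-neighbours in `A`.
      obtain hN | hM : (c + (s + 1)).choose c ≤ #N ∨ (c + 1 + s).choose (c + 1) ≤ #M := by
        omega
      · obtain ⟨S, hSN, hS⟩ | ⟨K, hKN, hK⟩ := ihc (s + 1) N hN
        · exact .inl ⟨S, hSN.trans (filter_subset _ _ |>.trans (erase_subset _ _)), hS⟩
        · refine .inr ⟨insert x K, insert_subset hx ?_, hK.insert fun b hb => ?_⟩
          · exact hKN.trans (filter_subset _ _ |>.trans (erase_subset _ _))
          · exact (mem_filter.1 (hKN hb)).2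
      · obtain ⟨S, hSM, hS⟩ | ⟨K, hKM, hK⟩ := ihs M hM
        · refine .inl ⟨insert x S, insert_subset hx ?_, ?_⟩
          · exact hSM.trans (filter_subset _ _ |>.trans (erase_subset _ _))
          · rw [← isNClique_compl] at hS ⊢
            refine hS.insert fun b hb => ?_
            obtain ⟨hb, hxb⟩ := mem_filter.1 (hSM hb)
            exact ⟨(ne_of_mem_erase hb).symm, hxb⟩
        · exact .inr ⟨K, hKM.trans (filter_subset _ _ |>.trans (erase_subset _ _)), hK⟩

open Finset in
theorem SimpleGraph.exists_isNIndepSet_of_subset_neighborSet {V : Type*} [Fintype V]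
    {G : SimpleGraph V} {s : ℕ} {x : V} {A : Finset V} (hA : ↑A ⊆ G.neighborSet x)
    (h : G.cliqueNum ^ s ≤ #A) : ∃ S ⊆ A, G.IsNIndepSet s S := by
  classical
  have hω : 1 ≤ G.cliqueNum := by
    simpa using (show G.IsClique (({x} : Finset V) : Set V) by simp).card_le_cliqueNum
  have hchoose : (G.cliqueNum - 1 + s).choose (G.cliqueNum - 1) ≤ #A := by
    calc _ = (G.cliqueNum - 1 + s).choose s := Nat.choose_symm_add
      _ ≤ (G.cliqueNum - 1 + s + 1 - s) ^ s := Nat.choose_le_sub_pow _ _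
      _ = G.cliqueNum ^ s := by congr 1; omega
      _ ≤ #A := h
  refine (G.exists_isNIndepSet_or_isNClique _ s A hchoose).resolve_right ?_
  rintro ⟨K, hKA, hK⟩
  -- a clique in the neighbourhood of `x` extends by `x`
  have hKx := (hK.insert fun b hb => hA (hKA hb)).isClique.card_le_cliqueNum
  rw [(hK.insert fun b hb => hA (hKA hb)).card_eq] at hKx
  omega

theorem SimpleGraph.two_le_cliqueNum_of_adj {V : Type*} [Fintype V] {G : SimpleGraph V}
    {x y : V} (h : G.Adj x y) : 2 ≤ G.cliqueNum := by
  classical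
  have hxy : G.IsClique (({x, y} : Finset V) : Set V) := by simpa using fun _ => h
  simpa [Finset.card_pair h.ne] using hxy.card_le_cliqueNum

theorem not_isInducedFree_of_isIndContained {V W : Type*} {G : SimpleGraph V}
    {H : SimpleGraph W} (h : H ⊴ G) : ¬ IsInducedFree G H := by
  obtain ⟨S, ⟨e⟩⟩ := isIndContained_iff_exists_iso_induce.1 h
  exact fun hfree => hfree S ⟨e.symm⟩

theorem doubleStarGraph_isIndContained {V : Type*} {G : SimpleGraph V} {s : ℕ} {v a : V}
    {W S : Finset V} (hva : G.Adj v a) (hW : G.IsNIndepSet s W) (hS : G.IsNIndepSet s S)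
    (hvW : ∀ w ∈ W, G.Adj v w) (haS : ∀ x ∈ S, G.Adj a x) (hvS : ∀ x ∈ S, ¬ G.Adj v x)
    (haW : ∀ w ∈ W, ¬ G.Adj a w) (hWS : ∀ w ∈ W, ∀ x ∈ S, ¬ G.Adj w x) :
    doubleStarGraph s ⊴ G := by
  classical
  set gW : Fin s → V := fun r => (W.equivFinOfCardEq hW.card_eq).symm r
  set gS : Fin s → V := fun r => (S.equivFinOfCardEq hS.card_eq).symm r
  have hgW : Function.Injective gW := Subtype.val_injective.comp (Equiv.injective _)
  have hgS : Function.Injective gS := Subtype.val_injective.comp (Equiv.injective _)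
  have hgWmem r : gW r ∈ W := Subtype.property _
  have hgSmem r : gS r ∈ S := Subtype.property _
  have hWW r r' : ¬ G.Adj (gW r) (gW r') := fun h =>
    hW.isIndepSet (hgWmem r) (hgWmem r') h.ne h
  have hSS r r' : ¬ G.Adj (gS r) (gS r') := fun h =>
    hS.isIndepSet (hgSmem r) (hgSmem r') h.ne h
  have hvW' r : G.Adj v (gW r) := hvW _ (hgWmem r)
  have haS' r : G.Adj a (gS r) := haS _ (hgSmem r)
  have hvS' r : ¬ G.Adj v (gS r) := hvS _ (hgSmem r)
  have haW' r : ¬ G.Adj a (gW r) := haW _ (hgWmem r)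
  have hWS' r r' : ¬ G.Adj (gW r) (gS r') := hWS _ (hgWmem r) _ (hgSmem r')
  -- `W` and `S` are nonempty as soon as they are indexed, which separates all the roles
  have hWa r : gW r ≠ a := fun e => hWS' r r (e ▸ haS' r)
  have hSv r : gS r ≠ v := fun e => hWS' r r (e ▸ (hvW' r).symm)
  have hWneS r r' : gW r ≠ gS r' := fun e => hvS' r' (e ▸ hvW' r)
  let f : Fin (2 * s + 2) → V := fun i =>
    if h0 : i.val = 0 then v else if h1 : i.val = 1 then a
    else if h : i.val < s + 2 then gW ⟨i - 2, by omega⟩ else gS ⟨i - (s + 2), by omega⟩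
  have hf : Function.Injective f := by
    rintro ⟨i, hi⟩ ⟨j, hj⟩ hij
    simp only [f, Fin.mk.injEq] at hij ⊢
    split_ifs at hij <;> simp [hva.ne, hva.ne', (hvW' _).ne, (hvW' _).ne', (haS' _).ne,
      (haS' _).ne', hWa, (hWa _).symm, hSv, (hSv _).symm, hWneS, (hWneS _ _).symm, hgW.eq_iff,
      hgS.eq_iff] at hij ⊢ <;> omega
  refine isIndContained_iff_exists_comap_eq.2
    ⟨⟨f, hf⟩, SimpleGraph.ext <| funext₂ fun ⟨i, hi⟩ ⟨j, hj⟩ => ?_⟩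
  simp only [comap_adj, Function.Embedding.coeFn_mk, doubleStarGraph, fromRel_adj, ne_eq,
    Fin.ext_iff, f, eq_iff_iff]
  split_ifs <;> simp [adj_comm, hva, hvW', haS', hvS', haW', hWS', hWW, hSS] <;> omega

theorem IsInducedFree.ncard_adj_anticomplete_lt {V : Type*} [Fintype V] {G : SimpleGraph V}
    {s : ℕ} (hfree : IsInducedFree G (doubleStarGraph s)) {v a : V} (hva : G.Adj v a)
    {T : Set V} (hvT : ∀ x ∈ T, ¬ G.Adj v x)
    (hT : G.cliqueNum ^ s ≤ {x ∈ T | G.Adj a x}.ncard) :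
    {w | G.Adj v w ∧ ¬ G.Adj a w ∧ ∀ x ∈ T, ¬ G.Adj w x}.ncard < G.cliqueNum ^ s := by
  classical
  by_contra! h
  obtain ⟨W, hWA, hW⟩ := exists_isNIndepSet_of_subset_neighborSet (x := v)
    (A := {w | G.Adj v w ∧ ¬ G.Adj a w ∧ ∀ x ∈ T, ¬ G.Adj w x}.toFinset)
    (fun w hw => (Set.mem_toFinset.1 hw).1) (by rwa [← Set.ncard_eq_toFinset_card'])
  obtain ⟨S, hST, hS⟩ := exists_isNIndepSet_of_subset_neighborSet (x := a)
    (A := {x ∈ T | G.Adj a x}.toFinset)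
    (fun x hx => (Set.mem_toFinset.1 hx).2) (by rwa [← Set.ncard_eq_toFinset_card'])
  have hW' w (hw : w ∈ W) := Set.mem_toFinset.1 (hWA hw)
  have hS' x (hx : x ∈ S) := Set.mem_toFinset.1 (hST hx)
  refine not_isInducedFree_of_isIndContained (doubleStarGraph_isIndContained hva hW hS
    (fun w hw => (hW' w hw).1) (fun x hx => (hS' x hx).2) (fun x hx => hvT x (hS' x hx).1)
    (fun w hw => (hW' w hw).2.1) (fun w hw x hx => (hW' w hw).2.2 x (hS' x hx).1)) hfree

theorem SimpleGraph.colorable_of_ncard_adj_key_le_lt {W : Type*} [Finite W]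
    (G : SimpleGraph W) (key : W → ℕ) {d : ℕ}
    (h : ∀ v, {w | G.Adj v w ∧ key w ≤ key v}.ncard < d) : G.Colorable d := by
  classical
  have := Fintype.ofFinite W
  have greedy (A : Finset W) : ∃ f : W → ℕ, (∀ v ∈ A, f v < d) ∧
      ∀ u ∈ A, ∀ w ∈ A, G.Adj u w → f u ≠ f w := by
    induction A using Finset.induction_on_max_value key with
    | empty => exact ⟨0, by simp, by simp⟩
    | insert v A hvA hmax ih =>
      obtain ⟨f, hfd, hf⟩ := ih
      obtain ⟨c, hcd, hc⟩ : ∃ c < d, c ∉ f '' {w | G.Adj v w ∧ key w ≤ key v} := by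
        by_contra! H
        have hsub : (Finset.range d : Set ℕ) ⊆ f '' {w | G.Adj v w ∧ key w ≤ key v} :=
          fun c hc => H c (by simpa using hc)
        have := (Set.ncard_le_ncard hsub).trans (Set.ncard_image_le (Set.toFinite _))
        simp only [Set.ncard_coe_finset, Finset.card_range] at this
        exact this.not_gt (h v)
      have hback : ∀ w ∈ A, G.Adj v w → c ≠ f w := fun w hw hvw e =>
        hc ⟨w, ⟨hvw, hmax w hw⟩, e.symm⟩
      refine ⟨Function.update f v c, ?_, ?_⟩
      · intro u hu
        rcases eq_or_ne u v with rfl | huv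
        · simpa
        · simpa [huv] using hfd u ((Finset.mem_insert.1 hu).resolve_left huv)
      · intro u hu w hw huw
        have hu' := Finset.mem_insert.1 hu
        have hw' := Finset.mem_insert.1 hw
        by_cases huv : u = v <;> by_cases hwv : w = v
        · exact absurd (huv ▸ hwv ▸ huw) (G.irrefl)
        · subst huv
          simpa [hwv] using hback w (hw'.resolve_left hwv) huw
        · subst hwv
          simpa [huv] using (hback u (hu'.resolve_left huv) huw.symm).symm
        · simpa [huv, hwv] using hf u (hu'.resolve_left huv) w (hw'.resolve_left hwv) huw
  obtain ⟨f, hfd, hf⟩ := greedy Finset.univ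
  exact ⟨Coloring.mk (fun v => ⟨f v, hfd v (Finset.mem_univ v)⟩) fun {u w} huw e =>
    hf u (Finset.mem_univ u) w (Finset.mem_univ w) huw (Fin.mk.inj_iff.1 e)⟩

theorem SimpleGraph.colorable_mul_of_ncard_adj_fiber_key_le_lt {W ι : Type*} [Finite W]
    [Fintype ι] (G : SimpleGraph W) (p : W → ι) (key : W → ℕ) {d : ℕ}
    (h : ∀ v, {w | G.Adj v w ∧ p v = p w ∧ key w ≤ key v}.ncard < d) :
    G.Colorable (Fintype.card ι * d) := by
  let G' : SimpleGraph W :=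
    { Adj u w := G.Adj u w ∧ p u = p w
      symm := ⟨fun _ _ h => ⟨h.1.symm, h.2.symm⟩⟩
      loopless := ⟨fun _ h => G.irrefl h.1⟩ }
  obtain ⟨c⟩ := G'.colorable_of_ncard_adj_key_le_lt key fun v => by
    simpa only [G', and_assoc] using h v
  rw [← Fintype.card_fin d, ← Fintype.card_prod]
  exact (Coloring.mk (fun v => (p v, c v)) fun {u w} huw e =>
    c.valid ⟨huw, congrArg Prod.fst e⟩ (congrArg Prod.snd e)).colorable

open Finset in
theorem SimpleGraph.card_le_cliqueNum_of_ncard_nonadj_le {V ι : Type*} [Fintype V] [Fintype ι]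
    {G : SimpleGraph V} (L : ι → Set V) {D : ℕ} (hsize : ∀ i, G.cliqueNum * D < (L i).ncard)
    (hcross : ∀ i j, i ≠ j → ∀ v ∈ L i, {u ∈ L j | ¬ G.Adj v u}.ncard ≤ D) :
    Fintype.card ι ≤ G.cliqueNum := by
  classical
  have greedy (J : Finset ι) (hJ : #J ≤ G.cliqueNum + 1) :
      ∃ K : Finset V, G.IsNClique #J K ∧ ∀ x ∈ K, ∃ j ∈ J, x ∈ L j := by
    induction J using Finset.induction_on with
    | empty => exact ⟨∅, by simp [isNClique_iff], by simp⟩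
    | insert i J hiJ ih =>
      rw [card_insert_of_notMem hiJ] at hJ ⊢
      obtain ⟨K, hK, hKL⟩ := ih (by omega)
      have hbad : (⋃ x ∈ K, {u ∈ L i | ¬ G.Adj x u}).ncard < (L i).ncard := calc
        _ ≤ ∑ x ∈ K, {u ∈ L i | ¬ G.Adj x u}.ncard := set_ncard_biUnion_le _ _
        _ ≤ #K • D := sum_le_card_nsmul _ _ _ fun x hx => by
          obtain ⟨j, hj, hxj⟩ := hKL x hx
          exact hcross j i (ne_of_mem_of_not_mem hj hiJ) x hxj
        _ ≤ G.cliqueNum * D := by rw [smul_eq_mul, hK.card_eq]; gcongr; omega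
        _ < _ := hsize i
      obtain ⟨y, hyL, hy⟩ := Set.exists_mem_notMem_of_ncard_lt_ncard hbad
      have hKy : ∀ x ∈ K, G.Adj x y := fun x hx => by
        by_contra h
        exact hy (Set.mem_biUnion hx ⟨hyL, h⟩)
      refine ⟨insert y K, hK.insert fun x hx => (hKy x hx).symm, ?_⟩
      intro x hx
      rcases mem_insert.1 hx with rfl | hx
      · exact ⟨i, mem_insert_self i J, hyL⟩
      · obtain ⟨j, hj, hxj⟩ := hKL x hx
        exact ⟨j, mem_insert_of_mem hj, hxj⟩
  by_contra! hk
  obtain ⟨J, -, hJ⟩ := exists_subset_card_eq (s := (univ : Finset ι)) (Nat.succ_le_of_lt hk)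
  obtain ⟨K, hK, -⟩ := greedy J hJ.le
  have := hK.isClique.card_le_cliqueNum
  rw [hK.card_eq, hJ] at this
  omega

section Template

variable {V : Type*} {G : SimpleGraph V} {s : ℕ} {L0 : Set V} {k : ℕ}
  {L : Fin k → Set V}

variable (G L) in
/-- The paper's `I_v`. -/
def templateIndices (v : V) : Set (Fin k) := {i | ∃ u ∈ L i, G.Adj v u}

variable (G s L0 L) in
def smallPartsUnion (m : ℕ) : Set V :=
  {v | ∃ I : Set (Fin k), (templatePart G s L0 L I).ncard ≤ m ∧ v ∈ templatePart G s L0 L I}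

theorem templateIndices_eq_of_mem_templatePart {I : Set (Fin k)} {v : V}
    (h : v ∈ templatePart G s L0 L I) : templateIndices G L v = I :=
  Set.ext (h.2.2 ·)

variable [Fintype V]

theorem IsTemplate.card_le_cliqueNum (hT : IsTemplate G s L0 L) (hω : 2 ≤ G.cliqueNum) :
    k ≤ G.cliqueNum := by
  obtain ⟨-, -, -, -, hsize, hcross⟩ := hT
  simpa using card_le_cliqueNum_of_ncard_nonadj_le L (D := G.cliqueNum ^ (s + 3))
    (fun i => calc
      G.cliqueNum * G.cliqueNum ^ (s + 3) = G.cliqueNum ^ (s + 4) := by ring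
      _ < G.cliqueNum ^ (s + 5) := Nat.pow_lt_pow_right hω (by omega)
      _ ≤ (L i).ncard := (hsize i).1)
    hcross

theorem IsTemplate.cliqueNum_pow_le_ncard_adj (hT : IsTemplate G s L0 L)
    (hω : 2 ≤ G.cliqueNum) {i j : Fin k} (hij : i ≠ j) {a : V} (ha : a ∈ L i) :
    G.cliqueNum ^ s ≤ {x ∈ L j | G.Adj a x}.ncard := by
  obtain ⟨-, -, -, -, hsize, hcross⟩ := hT
  have hsplit := Set.ncard_inter_add_ncard_sdiff_eq_ncard (L j) (G.neighborSet a)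
  have hnonadj : (L j \ G.neighborSet a).ncard ≤ G.cliqueNum ^ (s + 3) := hcross i j hij a ha
  have hLj := (hsize j).1
  have hpow : G.cliqueNum ^ s + G.cliqueNum ^ (s + 3) ≤ G.cliqueNum ^ (s + 5) := by
    have h1 : G.cliqueNum ^ s ≤ G.cliqueNum ^ (s + 3) :=
      Nat.pow_le_pow_right (by omega) (by omega)
    have h2 : G.cliqueNum ^ (s + 5) = G.cliqueNum ^ (s + 3) * G.cliqueNum ^ 2 := by ring
    have h3 : 4 ≤ G.cliqueNum ^ 2 := by nlinarith
    nlinarith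
  change G.cliqueNum ^ s ≤ (L j ∩ G.neighborSet a).ncard
  omega

theorem IsTemplate.ncard_adj_not_subset_templateIndices_le
    (hfree : IsInducedFree G (doubleStarGraph s)) (hT : IsTemplate G s L0 L)
    (hω : 2 ≤ G.cliqueNum) {v : V} {t : Fin k} (hvt : ∀ x ∈ L t, ¬ G.Adj v x) :
    {w | G.Adj v w ∧ (∀ x ∈ L t, ¬ G.Adj w x) ∧
      ¬ templateIndices G L v ⊆ templateIndices G L w}.ncard ≤ G.cliqueNum ^ (s + 1) := by
  classical
  set J := (templateIndices G L v).toFinset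
  let B : Fin k → Set V := fun j =>
    {w | G.Adj v w ∧ (∀ x ∈ L j, ¬ G.Adj w x) ∧ ∀ x ∈ L t, ¬ G.Adj w x}
  have hB : ∀ j ∈ J, (B j).ncard ≤ G.cliqueNum ^ s := by
    intro j hj
    obtain ⟨a, ha, hva⟩ := Set.mem_toFinset.1 hj
    have hjt : j ≠ t := by rintro rfl; exact hvt a ha hva
    refine (Set.ncard_le_ncard ?_).trans
      (hfree.ncard_adj_anticomplete_lt hva hvt (hT.cliqueNum_pow_le_ncard_adj hω hjt ha)).le
    exact fun w hw => ⟨hw.1, fun h => hw.2.1 a ha h.symm, hw.2.2⟩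
  have hsub : {w | G.Adj v w ∧ (∀ x ∈ L t, ¬ G.Adj w x) ∧
      ¬ templateIndices G L v ⊆ templateIndices G L w} ⊆ ⋃ j ∈ J, B j := by
    rintro w ⟨hvw, hwt, hsub⟩
    obtain ⟨j, hjv, hjw⟩ := Set.not_subset.1 hsub
    exact Set.mem_biUnion (Set.mem_toFinset.2 hjv)
      (show w ∈ B j from ⟨hvw, fun x hx h => hjw ⟨x, hx, h⟩, hwt⟩)
  calc _ ≤ (⋃ j ∈ J, B j).ncard := Set.ncard_le_ncard hsub
    _ ≤ ∑ j ∈ J, (B j).ncard := Finset.set_ncard_biUnion_le _ _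
    _ ≤ J.card • G.cliqueNum ^ s := Finset.sum_le_card_nsmul _ _ _ hB
    _ ≤ k * G.cliqueNum ^ s := by
      rw [smul_eq_mul]; gcongr; simpa using J.card_le_univ
    _ ≤ G.cliqueNum * G.cliqueNum ^ s := by gcongr; exact hT.card_le_cliqueNum hω
    _ = G.cliqueNum ^ (s + 1) := by ring

theorem IsTemplate.ncard_adj_smallPartsUnion_lt (hfree : IsInducedFree G (doubleStarGraph s))
    (hT : IsTemplate G s L0 L) (hω : 2 ≤ G.cliqueNum) {m : ℕ} {v : V}
    (hv : v ∈ smallPartsUnion G s L0 L m) {t : Fin k} (hvt : ∀ x ∈ L t, ¬ G.Adj v x) :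
    {w ∈ smallPartsUnion G s L0 L m | G.Adj v w ∧ (∀ x ∈ L t, ¬ G.Adj w x) ∧
      (templateIndices G L w).ncard ≤ (templateIndices G L v).ncard}.ncard
      < m + G.cliqueNum ^ (s + 1) := by
  obtain ⟨I, hIm, hvI⟩ := hv
  have hsub : {w ∈ smallPartsUnion G s L0 L m | G.Adj v w ∧ (∀ x ∈ L t, ¬ G.Adj w x) ∧
      (templateIndices G L w).ncard ≤ (templateIndices G L v).ncard} ⊆
      (templatePart G s L0 L I \ {v}) ∪ {w | G.Adj v w ∧ (∀ x ∈ L t, ¬ G.Adj w x) ∧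
        ¬ templateIndices G L v ⊆ templateIndices G L w} := by
    rintro w ⟨⟨J, -, hwJ⟩, hvw, hwt, hcard⟩
    by_cases hsub : templateIndices G L v ⊆ templateIndices G L w
    · refine .inl ⟨?_, hvw.ne'⟩
      rwa [← templateIndices_eq_of_mem_templatePart hvI, Set.eq_of_subset_of_ncard_le hsub hcard,
        templateIndices_eq_of_mem_templatePart hwJ]
    · exact .inr ⟨hvw, hwt, hsub⟩
  have hI := Set.ncard_sdiff_singleton_of_mem hvI
  have hIpos : 0 < (templatePart G s L0 L I).ncard := (Set.nonempty_of_mem hvI).ncard_pos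
  have hrest := hT.ncard_adj_not_subset_templateIndices_le hfree hω hvt
  calc _ ≤ _ := Set.ncard_le_ncard hsub
    _ ≤ _ := Set.ncard_union_le _ _
    _ < m + G.cliqueNum ^ (s + 1) := by omega

end Template

theorem template_small_chromatic_general {V : Type*} [Fintype V] (G : SimpleGraph V) (s : ℕ)
    (hfree : IsInducedFree G (doubleStarGraph s))
    (L0 : Set V) (k : ℕ) (L : Fin k → Set V) (hT : IsOptimalTemplate G s L0 L) (m : ℕ) :
    (G.induce {v | ∃ I : Set (Fin k), (templatePart G s L0 L I).ncard ≤ m ∧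
        v ∈ templatePart G s L0 L I}).chromaticNumber
      ≤ ((2 * G.cliqueNum * (m + G.cliqueNum ^ (s+1)) : ℕ) : ℕ∞) := by
  change (G.induce (smallPartsUnion G s L0 L m)).chromaticNumber ≤ _
  set U := smallPartsUnion G s L0 L m
  obtain hU | ⟨v₀, I₀, -, hv₀⟩ := U.eq_empty_or_nonempty
  · have : IsEmpty U := Set.isEmpty_coe_sort.2 hU
    exact (Colorable.of_isEmpty 0).chromaticNumber_le.trans (Nat.cast_le.2 (Nat.zero_le _))
  obtain ⟨-, i₀, u₀, -, hv₀u₀⟩ := hv₀.1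
  have hω := two_le_cliqueNum_of_adj hv₀u₀
  have hmiss (x : U) : ∃ t, ∀ y ∈ L t, ¬ G.Adj x y := by
    obtain ⟨I, -, hx⟩ := x.2
    obtain ⟨t, -, -, ht, -⟩ := hx.2.1.1
    exact ⟨t, ht⟩
  choose p hp using hmiss
  have hdeg (x : U) : {y | (G.induce U).Adj x y ∧ p x = p y ∧
      (templateIndices G L y).ncard ≤ (templateIndices G L x).ncard}.ncard
      < m + G.cliqueNum ^ (s + 1) := by
    refine (Set.ncard_le_ncard_of_injOn Subtype.val ?_ Subtype.val_injective.injOn).trans_lt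
      (hT.1.ncard_adj_smallPartsUnion_lt hfree hω x.2 (hp x))
    rintro y ⟨hxy, hpy, hkey⟩
    exact ⟨y.2, hxy, hpy ▸ hp y, hkey⟩
  have hcol := (G.induce U).colorable_mul_of_ncard_adj_fiber_key_le_lt p
    (fun x => (templateIndices G L x).ncard) hdeg
  refine (hcol.mono ?_).chromaticNumber_le
  rw [Fintype.card_fin]
  have := hT.1.card_le_cliqueNum hω
  gcongr
  omega

/-- The union of the sets `M_I` over all `m`-small `I` has chromatic number at most
`2 ω (m + ω^{s+1})`. -/
theorem template_small_chromatic {V : Type*} [Fintype V] (G : SimpleGraph V) (s : ℕ)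
    (hs : 1 ≤ s) (hfree : IsInducedFree G (doubleStarGraph s))
    (L0 : Set V) (k : ℕ) (L : Fin k → Set V) (hT : IsOptimalTemplate G s L0 L) (m : ℕ) :
    (G.induce {v | ∃ I : Set (Fin k), (templatePart G s L0 L I).ncard ≤ m ∧
        v ∈ templatePart G s L0 L I}).chromaticNumber
      ≤ ((2 * G.cliqueNum * (m + G.cliqueNum ^ (s+1)) : ℕ) : ℕ∞) :=
  template_small_chromatic_general G s hfree L0 k L hT m
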